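/- arXiv:2209.11121 — 5 statements merged into one kernel-verified Lean document; each statement's English description precedes it below -/
import Mathlib

section
/- Let s and m be positive integers with 2m ≤ s, let ε : {1,…,s} → ℝ and ℓ : ℝ → ℝ, and let real numbers c, ε_a, L_a, α with 0 < c ≤ ε_a be given. Assume: (i) ℓ is antitone on (−∞, −c] and monotone nondecreasing on [c, ∞); (ii) ℓ(η) ≤ L_a for all η ∈ [−c, c]; (iii) ℓ(e) ≥ L_a for every e with |e| ≥ ε_a; (iv) there exist disjoint index sets M₋, M₊ ⊆ {1,…,s}, each of cardinality m, such that ε_i ≤ −ε_a for all i ∈ M₋, ε_i ≥ ε_a for all i ∈ M₊, and every index i ∉ M₋ ∪ M₊ satisfies ε_j ≤ ε_i for all j ∈ M₋ and ε_i ≤ ε_j for all j ∈ M₊; (v) the set S := {i ∈ {1,…,s} : ℓ(ε_i) > α} has cardinality exactly m. Then the tailored risk equals the empirical risk: α + (1/m)·Σ_{i ∈ M₋ ∪ M₊} max(ℓ(ε_i) − α, 0) = α + (1/m)·Σ_{i=1}^{s} max(ℓ(ε_i) − α, 0). -/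
/-- Deterministic core of Theorem 1 (adaptive data selection), two-sided tail scenario:
the tailored risk computed over the selected indices `M₋ ∪ M₊` equals the empirical risk
computed over all indices. -/
theorem tailored_risk_eq_empirical_risk_two_sided
    (s m : ℕ) (hs : 0 < s) (hm : 0 < m) (h2m : 2 * m ≤ s)
    (ε : Fin s → ℝ) (ℓ : ℝ → ℝ) (c εa La α : ℝ)
    (hc : 0 < c) (hcεa : c ≤ εa)
    (hanti : AntitoneOn ℓ (Set.Iic (-c)))
    (hmono : MonotoneOn ℓ (Set.Ici c))
    (hmid : ∀ η ∈ Set.Icc (-c) c, ℓ η ≤ La)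
    (htail : ∀ e : ℝ, εa ≤ |e| → La ≤ ℓ e)
    (Mneg Mpos : Finset (Fin s))
    (hdisj : Disjoint Mneg Mpos)
    (hMnegcard : Mneg.card = m) (hMposcard : Mpos.card = m)
    (hMneg : ∀ i ∈ Mneg, ε i ≤ -εa)
    (hMpos : ∀ i ∈ Mpos, εa ≤ ε i)
    (hbetween : ∀ i : Fin s, i ∉ Mneg ∪ Mpos →
      (∀ j ∈ Mneg, ε j ≤ ε i) ∧ (∀ j ∈ Mpos, ε i ≤ ε j))
    (hScard : (Finset.univ.filter (fun i : Fin s => α < ℓ (ε i))).card = m) :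
    α + (1 / (m : ℝ)) * ∑ i ∈ Mneg ∪ Mpos, max (ℓ (ε i) - α) 0
      = α + (1 / (m : ℝ)) * ∑ i : Fin s, max (ℓ (ε i) - α) 0 := by
  have key : ∀ i : Fin s, i ∉ Mneg ∪ Mpos → ℓ (ε i) ≤ α := by
    intro i hi
    by_contra h
    push_neg at h
    obtain ⟨T, hTcard, hiT, hT⟩ :
        ∃ T : Finset (Fin s), T.card = m ∧ i ∉ T ∧ ∀ j ∈ T, α < ℓ (ε j) := by
      rcases le_or_gt (ε i) (-c) with hle | h1
      · refine ⟨Mneg, hMnegcard, fun hmem => hi (Finset.mem_union_left _ hmem), ?_⟩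
        intro j hj
        have hji := (hbetween i hi).1 j hj
        have : ℓ (ε i) ≤ ℓ (ε j) := hanti (le_trans hji hle) hle hji
        linarith
      · rcases le_or_gt c (ε i) with hge | h2
        · refine ⟨Mpos, hMposcard, fun hmem => hi (Finset.mem_union_right _ hmem), ?_⟩
          intro j hj
          have hij := (hbetween i hi).2 j hj
          have : ℓ (ε i) ≤ ℓ (ε j) := hmono hge (le_trans hge hij) hij
          linarith
        · refine ⟨Mneg, hMnegcard, fun hmem => hi (Finset.mem_union_left _ hmem), ?_⟩
          intro j hj
          have hLa : ℓ (ε i) ≤ La := hmid _ ⟨h1.le, h2.le⟩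
          have hj' := hMneg j hj
          have : La ≤ ℓ (ε j) := htail _ (le_abs.mpr (Or.inr (by linarith)))
          linarith
    have hsub : insert i T ⊆ Finset.univ.filter (fun k => α < ℓ (ε k)) := by
      intro j hj
      simp only [Finset.mem_insert] at hj
      rcases hj with rfl | hj
      · simp [h]
      · simp [hT j hj]
    have hcard := Finset.card_le_card hsub
    rw [Finset.card_insert_of_notMem hiT, hTcard, hScard] at hcard
    omega
  have hsum : ∑ i ∈ Mneg ∪ Mpos, max (ℓ (ε i) - α) 0
      = ∑ i : Fin s, max (ℓ (ε i) - α) 0 := by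
    apply Finset.sum_subset (Finset.subset_univ _)
    intro i _ hi
    have := key i hi
    simp [max_eq_right, sub_nonpos.mpr this]
  rw [hsum]
end

section
/- Let s and m be positive integers with 2m ≤ s, let ε : {1,…,s} → ℝ and ℓ : ℝ → ℝ, and let real numbers c, ε_a, L_a, α with 0 < c ≤ ε_a be given. Assume: (i) ℓ is antitone on (−∞, −c] and monotone nondecreasing on [c, ∞); (ii) ℓ(η) ≤ L_a for all η ∈ [−c, c]; (iii) ℓ(e) ≥ L_a for every e with |e| ≥ ε_a; (iv) there exist disjoint index sets M₋, M₊ ⊆ {1,…,s}, each of cardinality m, such that ε_i ≤ −ε_a for all i ∈ M₋, ε_i ≥ ε_a for all i ∈ M₊, and every index i ∉ M₋ ∪ M₊ satisfies ε_j ≤ ε_i for all j ∈ M₋ and ε_i ≤ ε_j for all j ∈ M₊. If the set S := {i ∈ {1,…,s} : ℓ(ε_i) > α} has cardinality at most m, then S ⊆ M₋ ∪ M₊. -/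
/-- Step 3 of the proof of Theorem 1, two-sided tail scenario: the index set `S` of losses
exceeding the risk threshold `α` is contained in the adaptively selected set `M₋ ∪ M₊`. -/
theorem extreme_loss_indices_subset_selected_two_sided
    (s m : ℕ) (hs : 0 < s) (hm : 0 < m) (h2m : 2 * m ≤ s)
    (ε : Fin s → ℝ) (ℓ : ℝ → ℝ) (c εa La α : ℝ)
    (hc : 0 < c) (hcεa : c ≤ εa)
    (hanti : AntitoneOn ℓ (Set.Iic (-c)))
    (hmono : MonotoneOn ℓ (Set.Ici c))
    (hmid : ∀ η ∈ Set.Icc (-c) c, ℓ η ≤ La)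
    (htail : ∀ e : ℝ, εa ≤ |e| → La ≤ ℓ e)
    (Mneg Mpos : Finset (Fin s))
    (hdisj : Disjoint Mneg Mpos)
    (hMnegcard : Mneg.card = m) (hMposcard : Mpos.card = m)
    (hMneg : ∀ i ∈ Mneg, ε i ≤ -εa)
    (hMpos : ∀ i ∈ Mpos, εa ≤ ε i)
    (hbetween : ∀ i : Fin s, i ∉ Mneg ∪ Mpos →
      (∀ j ∈ Mneg, ε j ≤ ε i) ∧ (∀ j ∈ Mpos, ε i ≤ ε j))
    (hScard : (Finset.univ.filter (fun i : Fin s => α < ℓ (ε i))).card ≤ m) :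
    Finset.univ.filter (fun i : Fin s => α < ℓ (ε i)) ⊆ Mneg ∪ Mpos := by
  intro i hiS
  have hi : α < ℓ (ε i) := (Finset.mem_filter.mp hiS).2
  by_contra hiM
  obtain ⟨hlow, hhigh⟩ := hbetween i hiM
  set S := Finset.univ.filter (fun i : Fin s => α < ℓ (ε i)) with hSdef
  rcases le_or_gt (ε i) (-c) with h1 | h1
  · have hsub : insert i Mneg ⊆ S := by
      intro j hj
      rcases Finset.mem_insert.mp hj with rfl | hj
      · exact hiS
      · simp only [hSdef, Finset.mem_filter, Finset.mem_univ, true_and]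
        have hj' : ε j ≤ -c := le_trans (hMneg j hj) (by linarith)
        have := hanti (Set.mem_Iic.mpr hj') (Set.mem_Iic.mpr h1) (hlow j hj)
        linarith
    have hni : i ∉ Mneg := fun h => hiM (Finset.mem_union_left _ h)
    have h := Finset.card_le_card hsub
    rw [Finset.card_insert_of_notMem hni, hMnegcard] at h
    omega
  rcases le_or_gt c (ε i) with h2 | h2
  · have hsub : insert i Mpos ⊆ S := by
      intro j hj
      rcases Finset.mem_insert.mp hj with rfl | hj
      · exact hiS
      · simp only [hSdef, Finset.mem_filter, Finset.mem_univ, true_and]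
        have hj' : c ≤ ε j := le_trans (by linarith) (hMpos j hj)
        have := hmono (Set.mem_Ici.mpr h2) (Set.mem_Ici.mpr hj') (hhigh j hj)
        linarith
    have hni : i ∉ Mpos := fun h => hiM (Finset.mem_union_right _ h)
    have h := Finset.card_le_card hsub
    rw [Finset.card_insert_of_notMem hni, hMposcard] at h
    omega
  · have hLa : α < La := lt_of_lt_of_le hi (hmid _ ⟨by linarith, by linarith⟩)
    have hsub : Mneg ∪ Mpos ⊆ S := by
      intro j hj
      simp only [hSdef, Finset.mem_filter, Finset.mem_univ, true_and]
      rcases Finset.mem_union.mp hj with hj | hj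
      · have hj1 := hMneg j hj
        have := htail (ε j) (by rw [abs_of_nonpos (by linarith : ε j ≤ 0)]; linarith)
        linarith
      · have hj1 := hMpos j hj
        have := htail (ε j) (by rw [abs_of_nonneg (by linarith : (0:ℝ) ≤ ε j)]; linarith)
        linarith
    have h := Finset.card_le_card hsub
    rw [Finset.card_union_of_disjoint hdisj, hMnegcard, hMposcard] at h
    omega
end

section
/- Let s and m be positive integers with m ≤ s, let ε : {1,…,s} → ℝ and ℓ : ℝ → ℝ, and let real numbers c, ε_a, L_a, α with 0 < c ≤ ε_a be given. Assume: (i) ℓ is antitone on (−∞, −c]; (ii) ℓ(η) ≤ L_a for all η ≥ −c; (iii) ℓ(e) ≥ L_a for every e ≤ −ε_a; (iv) there exists an index set M₋ ⊆ {1,…,s} of cardinality m such that ε_i ≤ −ε_a for all i ∈ M₋ and every index i ∉ M₋ satisfies ε_j ≤ ε_i for all j ∈ M₋. If the set S := {i ∈ {1,…,s} : ℓ(ε_i) > α} has cardinality at most m, then S ⊆ M₋. -/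
/-- Step 3 of the proof of Theorem 1, one-sided tail scenario: the index set `S` of losses
exceeding the risk threshold `α` is contained in the adaptively selected set `M₋` of the `m`
smallest irregular components. -/
theorem extreme_loss_indices_subset_selected_one_sided
    (s m : ℕ) (hs : 0 < s) (hm : 0 < m) (hms : m ≤ s)
    (ε : Fin s → ℝ) (ℓ : ℝ → ℝ) (c εa La α : ℝ)
    (hc : 0 < c) (hcεa : c ≤ εa)
    (hanti : AntitoneOn ℓ (Set.Iic (-c)))
    (hbdd : ∀ η : ℝ, -c ≤ η → ℓ η ≤ La)
    (htail : ∀ e : ℝ, e ≤ -εa → La ≤ ℓ e)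
    (Mneg : Finset (Fin s))
    (hMnegcard : Mneg.card = m)
    (hMneg : ∀ i ∈ Mneg, ε i ≤ -εa)
    (hbetween : ∀ i : Fin s, i ∉ Mneg → ∀ j ∈ Mneg, ε j ≤ ε i)
    (hScard : (Finset.univ.filter (fun i : Fin s => α < ℓ (ε i))).card ≤ m) :
    Finset.univ.filter (fun i : Fin s => α < ℓ (ε i)) ⊆ Mneg := by
  intro i hi
  by_contra hiM
  simp only [Finset.mem_filter, Finset.mem_univ, true_and] at hi
  -- every j ∈ Mneg has ℓ (ε j) > α
  have hkey : ∀ j ∈ Mneg, α < ℓ (ε j) := by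
    intro j hj
    have hεj : ε j ≤ -εa := hMneg j hj
    have hεjc : ε j ≤ -c := hεj.trans (by linarith)
    have hle : ℓ (ε i) ≤ ℓ (ε j) := by
      by_cases hεi : ε i ≤ -c
      · exact hanti hεjc hεi (hbetween i hiM j hj)
      · have h1 : ℓ (ε i) ≤ La := hbdd _ (le_of_not_ge hεi)
        exact h1.trans (htail _ hεj)
    exact lt_of_lt_of_le hi hle
  have hsub : insert i Mneg ⊆ Finset.univ.filter (fun k : Fin s => α < ℓ (ε k)) := by
    intro k hk
    simp only [Finset.mem_insert] at hk
    simp only [Finset.mem_filter, Finset.mem_univ, true_and]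
    rcases hk with rfl | hk
    · exact hi
    · exact hkey k hk
  have hcard := Finset.card_le_card hsub
  rw [Finset.card_insert_of_notMem hiM, hMnegcard] at hcard
  omega
end

section
/- Let D be an integrable real random variable with continuous cumulative distribution function F. Let r, c, v, g be real parameters with r > c ≥ 0, c + v > 0, and g ≥ 0, and set E := c + v, U := r − c + g, and W := r − c. Define the newsvendor profit π(x, d) := r·min(x, d) − c·x − v·max(x − d, 0) − g·max(d − x, 0), the loss L(x, d) := −π(x, d), and for β ∈ (0, 1) the β-conditional value-at-risk CVaR_β(x) := inf_{α ∈ ℝ} (α + (1/(1 − β))·E[max(L(x, D) − α, 0)]). Suppose q₁, q₂ ∈ ℝ satisfy F(q₁) = U·(1 − β)/(E + U) and F(q₂) = (E·β + U)/(E + U), and set x* := ((E + W)·q₁ + (U − W)·q₂)/(E + U). Then for every x ∈ ℝ, CVaR_β(x*) ≤ CVaR_β(x). -/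
/-!
Writing `E = c + v`, `U = r - c + g`, `W = r - c`, the loss is the maximum of the two affine
functions `E x - (E + W) d` and `-U x + (U - W) d`. With `α* = E x* - (E + W) q₁`, which also
equals `-U x* + (U - W) q₂` by the choice of `x*`, the integrand `(L(x*, d) - α*)⁺` becomes
`(E + W) (q₁ - d)⁺ + (U - W) (d - q₂)⁺`, and the indicators of `{d ≤ q₁}` and `{d > q₂}`, on
which the first resp. second affine piece is active, give a pointwise subgradient of
`(x, α) ↦ (L(x, d) - α)⁺` at `(x*, α*)`. Integrated and scaled by `1 / (1 - β)`, its
`x`-component is `(E F(q₁) - U (1 - F(q₂))) / (1 - β)` and, after adding the `1` coming from the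
term `α`, its `α`-component is `1 - (F(q₁) + 1 - F(q₂)) / (1 - β)`; the levels `F(q₁), F(q₂)`
are chosen exactly so that both vanish. Hence `(x*, α*)` minimises the
Rockafellar–Uryasev objective `α + (1 - β)⁻¹ E[(L(x, D) - α)⁺]` jointly, so `x*` minimises CVaR.
-/

open MeasureTheory Set

theorem newsvendor_loss_eq_max {r c v g : ℝ} (h : 0 ≤ r + v + g) (x d : ℝ) :
    -(r * min x d - c * x - v * max (x - d) 0 - g * max (d - x) 0)
      = max ((c + v) * x - (r + v) * d) (-((r - c + g) * x) + g * d) := by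
  rcases le_total x d with hxd | hdx
  · rw [min_eq_left hxd, max_eq_right (by linarith), max_eq_left (by linarith),
      max_eq_right (by nlinarith)]
    ring
  · rw [min_eq_right hdx, max_eq_left (by linarith), max_eq_right (by linarith),
      max_eq_left (by nlinarith)]
    ring

theorem newsvendor_loss_sub_eq_max {r c v g q₁ q₂ xs αs : ℝ} (h : 0 ≤ r + v + g)
    (hα₁ : αs = (c + v) * xs - (r + v) * q₁) (hα₂ : αs = -((r - c + g) * xs) + g * q₂)
    (x α d : ℝ) :
    -(r * min x d - c * x - v * max (x - d) 0 - g * max (d - x) 0) - α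
      = max ((r + v) * (q₁ - d) + ((c + v) * (x - xs) - (α - αs)))
          (g * (d - q₂) + (-((r - c + g) * (x - xs)) - (α - αs))) := by
  rw [newsvendor_loss_eq_max h, ← max_sub_sub_right]
  congr 1
  · linear_combination -hα₁
  · linear_combination -hα₂

theorem max_max_zero_add_indicator_le {A B q₁ q₂ : ℝ} (hA : 0 ≤ A) (hB : 0 ≤ B) (hq : q₁ ≤ q₂)
    (δ₁ δ₂ d : ℝ) :
    max (max (A * (q₁ - d)) (B * (d - q₂))) 0
        + (Iic q₁).indicator (fun _ => δ₁) d + (Ioi q₂).indicator (fun _ => δ₂) d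
      ≤ max (max (A * (q₁ - d) + δ₁) (B * (d - q₂) + δ₂)) 0 := by
  by_cases h₁ : d ≤ q₁
  · have h₂ : ¬ q₂ < d := by linarith
    have hB' : B * (d - q₂) ≤ A * (q₁ - d) := by nlinarith
    simp only [indicator, mem_Iic, mem_Ioi, h₁, h₂, if_true, if_false, add_zero,
      max_eq_left hB', max_eq_left (mul_nonneg hA (sub_nonneg.2 h₁))]
    exact (le_max_left _ _).trans (le_max_left _ _)
  by_cases h₂ : q₂ < d
  · have hA' : A * (q₁ - d) ≤ B * (d - q₂) := by nlinarith
    simp only [indicator, mem_Iic, mem_Ioi, h₁, h₂, if_true, if_false, add_zero,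
      max_eq_right hA', max_eq_left (mul_nonneg hB (sub_nonneg.2 h₂.le))]
    exact (le_max_right _ _).trans (le_max_left _ _)
  · have hA' : A * (q₁ - d) ≤ 0 := by nlinarith
    have hB' : B * (d - q₂) ≤ 0 := by nlinarith
    simp only [indicator, mem_Iic, mem_Ioi, h₁, h₂, if_false, add_zero,
      max_eq_right (max_le hA' hB')]
    exact le_max_right _ _

theorem quantile_levels_lt {E U β : ℝ} (hEU : 0 < E + U) (hβ : 0 < β) :
    U * (1 - β) / (E + U) < (E * β + U) / (E + U) := by
  gcongr
  nlinarith [mul_pos hβ hEU]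

theorem quantile_levels_balance {E U β : ℝ} (h : E + U ≠ 0) (y a : ℝ) :
    (E * y - a) * (U * (1 - β) / (E + U)) + (-(U * y) - a) * (1 - (E * β + U) / (E + U))
      = -((1 - β) * a) := by
  field_simp
  ring

section RandomVariable
variable {Ω : Type*} [MeasurableSpace Ω] {P : Measure Ω} {D : Ω → ℝ}

theorem lt_of_probReal_preimage_Iic_lt [IsFiniteMeasure P] {a b : ℝ}
    (h : P.real (D ⁻¹' Iic a) < P.real (D ⁻¹' Iic b)) : a < b := by
  by_contra! hba
  exact (measureReal_mono (preimage_mono (Iic_subset_Iic.2 hba))).not_gt h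

theorem probReal_preimage_Ioi [IsProbabilityMeasure P] (hD : AEMeasurable D P) (a : ℝ) :
    P.real (D ⁻¹' Ioi a) = 1 - P.real (D ⁻¹' Iic a) := by
  rw [← compl_Iic, preimage_compl, probReal_compl_eq_one_sub₀ (hD.nullMeasurable measurableSet_Iic)]

theorem integrable_max_max_zero [IsFiniteMeasure P] (hD : Integrable D P) (A B q₁ q₂ δ₁ δ₂ : ℝ) :
    Integrable (fun ω => max (max (A * (q₁ - D ω) + δ₁) (B * (D ω - q₂) + δ₂)) 0) P :=
  ((((integrable_const q₁).sub hD).const_mul A |>.add (integrable_const δ₁)).sup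
    ((hD.sub (integrable_const q₂)).const_mul B |>.add (integrable_const δ₂))).sup
    (integrable_const 0)

theorem integrable_indicator_comp_const [IsFiniteMeasure P] (hD : AEMeasurable D P) {s : Set ℝ}
    (hs : MeasurableSet s) (δ : ℝ) :
    Integrable (fun ω => s.indicator (fun _ => δ) (D ω)) P :=
  (integrable_const δ).indicator₀ (hD.nullMeasurable hs)

theorem integral_indicator_comp_const [IsFiniteMeasure P] (hD : AEMeasurable D P) {s : Set ℝ}
    (hs : MeasurableSet s) (δ : ℝ) :
    ∫ ω, s.indicator (fun _ => δ) (D ω) ∂P = δ * P.real (D ⁻¹' s) := by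
  change ∫ ω, (D ⁻¹' s).indicator (fun _ => δ) ω ∂P = _
  rw [integral_indicator₀ (hD.nullMeasurable hs), setIntegral_const, smul_eq_mul, mul_comm]

theorem integral_max_max_zero_add_le [IsFiniteMeasure P] (hD : Integrable D P)
    {A B q₁ q₂ : ℝ} (hA : 0 ≤ A) (hB : 0 ≤ B) (hq : q₁ ≤ q₂) (δ₁ δ₂ : ℝ) :
    ∫ ω, max (max (A * (q₁ - D ω)) (B * (D ω - q₂))) 0 ∂P
        + δ₁ * P.real (D ⁻¹' Iic q₁) + δ₂ * P.real (D ⁻¹' Ioi q₂)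
      ≤ ∫ ω, max (max (A * (q₁ - D ω) + δ₁) (B * (D ω - q₂) + δ₂)) 0 ∂P := by
  have h₀ := integrable_max_max_zero hD A B q₁ q₂ 0 0
  simp only [add_zero] at h₀
  have h₁ := integrable_indicator_comp_const hD.aemeasurable (measurableSet_Iic (a := q₁)) δ₁
  have h₂ := integrable_indicator_comp_const hD.aemeasurable (measurableSet_Ioi (a := q₂)) δ₂
  have h₀₁ : Integrable (fun ω => max (max (A * (q₁ - D ω)) (B * (D ω - q₂))) 0
      + (Iic q₁).indicator (fun _ => δ₁) (D ω)) P := h₀.add h₁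
  rw [← integral_indicator_comp_const hD.aemeasurable measurableSet_Iic,
    ← integral_indicator_comp_const hD.aemeasurable measurableSet_Ioi,
    ← integral_add h₀ h₁, ← integral_add h₀₁ h₂]
  exact integral_mono (h₀₁.add h₂) (integrable_max_max_zero hD A B q₁ q₂ δ₁ δ₂)
    fun ω => max_max_zero_add_indicator_le hA hB hq δ₁ δ₂ (D ω)
end RandomVariable

theorem newsvendor_cvar_minimiser_general {Ω : Type*} [MeasurableSpace Ω]
    (P : Measure Ω) [IsProbabilityMeasure P]
    (D : Ω → ℝ) (hDint : Integrable D P)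
    (F : ℝ → ℝ) (hF : F = fun η => (P {ω | D ω ≤ η}).toReal)
    (r c v g : ℝ) (hrc : c < r) (hcv : 0 < c + v) (hg : 0 ≤ g)
    (E U W : ℝ) (hE : E = c + v) (hU : U = r - c + g) (hW : W = r - c)
    (π : ℝ → ℝ → ℝ)
    (hπ : π = fun x d => r * min x d - c * x - v * max (x - d) 0 - g * max (d - x) 0)
    (L : ℝ → ℝ → ℝ) (hL : L = fun x d => -π x d)
    (β : ℝ) (hβ : β ∈ Set.Ioo (0 : ℝ) 1)
    (CVaR : ℝ → ℝ)
    (hCVaR : CVaR = fun x =>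
      ⨅ α : ℝ, (α + (1 / (1 - β)) * ∫ ω, max (L x (D ω) - α) 0 ∂P))
    (q₁ q₂ : ℝ)
    (hq₁ : F q₁ = U * (1 - β) / (E + U))
    (hq₂ : F q₂ = (E * β + U) / (E + U))
    (xs : ℝ) (hxs : xs = ((E + W) * q₁ + (U - W) * q₂) / (E + U)) :
    ∀ x : ℝ, CVaR xs ≤ CVaR x := by
  obtain ⟨hβ₀, hβ₁⟩ := hβ
  subst hE hU hW
  have hEU : 0 < c + v + (r - c + g) := by linarith
  have hF_Iic : ∀ q, P.real (D ⁻¹' Iic q) = F q := fun q => by rw [hF]; rfl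
  have hq : q₁ ≤ q₂ := (lt_of_probReal_preimage_Iic_lt (P := P) (D := D)
    (by rw [hF_Iic, hF_Iic, hq₁, hq₂]; exact quantile_levels_lt hEU hβ₀)).le
  set αs := (c + v) * xs - (r + v) * q₁ with hαs
  have hαs' : αs = -((r - c + g) * xs) + g * q₂ := by
    rw [hαs, hxs]; field_simp; ring
  have hrvg : 0 ≤ r + v + g := by linarith
  have hmin : ∀ x α, αs + 1 / (1 - β) * ∫ ω, max (L xs (D ω) - αs) 0 ∂P
      ≤ α + 1 / (1 - β) * ∫ ω, max (L x (D ω) - α) 0 ∂P := by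
    intro x α
    simp only [hL, hπ, newsvendor_loss_sub_eq_max hrvg hαs hαs', sub_self, mul_zero, neg_zero,
      add_zero]
    have h := integral_max_max_zero_add_le hDint (by linarith : 0 ≤ r + v) hg hq
      ((c + v) * (x - xs) - (α - αs)) (-((r - c + g) * (x - xs)) - (α - αs))
    rw [probReal_preimage_Ioi hDint.aemeasurable, hF_Iic, hF_Iic, hq₁, hq₂, add_assoc,
      quantile_levels_balance hEU.ne'] at h
    have h1β : 1 / (1 - β) * (1 - β) = 1 := one_div_mul_cancel (by linarith)
    linear_combination mul_le_mul_of_nonneg_left h (by positivity : 0 ≤ 1 / (1 - β))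
      + (α - αs) * h1β
  intro x
  simp only [hCVaR]
  exact (ciInf_le ⟨_, forall_mem_range.2 (hmin xs)⟩ αs).trans (le_ciInf (hmin x))

/-- Closed-form CVaR-minimising order quantity of the linear newsvendor problem
(Gotoh–Takano): with `E = c + v`, `U = r - c + g`, `W = r - c`, the order quantity
`x* = ((E + W)·q₁ + (U - W)·q₂)/(E + U)`, where `F(q₁) = U(1 - β)/(E + U)` and
`F(q₂) = (Eβ + U)/(E + U)`, minimises the `β`-conditional value-at-risk of the loss. -/
theorem newsvendor_cvar_minimiser {Ω : Type*} [MeasurableSpace Ω]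
    (P : Measure Ω) [IsProbabilityMeasure P]
    (D : Ω → ℝ) (hDmeas : Measurable D) (hDint : Integrable D P)
    (F : ℝ → ℝ) (hF : F = fun η => (P {ω | D ω ≤ η}).toReal)
    (hFcont : Continuous F)
    (r c v g : ℝ) (hrc : c < r) (hc : 0 ≤ c) (hcv : 0 < c + v) (hg : 0 ≤ g)
    (E U W : ℝ) (hE : E = c + v) (hU : U = r - c + g) (hW : W = r - c)
    (π : ℝ → ℝ → ℝ)
    (hπ : π = fun x d => r * min x d - c * x - v * max (x - d) 0 - g * max (d - x) 0)
    (L : ℝ → ℝ → ℝ) (hL : L = fun x d => -π x d)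
    (β : ℝ) (hβ : β ∈ Set.Ioo (0 : ℝ) 1)
    (CVaR : ℝ → ℝ)
    (hCVaR : CVaR = fun x =>
      ⨅ α : ℝ, (α + (1 / (1 - β)) * ∫ ω, max (L x (D ω) - α) 0 ∂P))
    (q₁ q₂ : ℝ)
    (hq₁ : F q₁ = U * (1 - β) / (E + U))
    (hq₂ : F q₂ = (E * β + U) / (E + U))
    (xs : ℝ) (hxs : xs = ((E + W) * q₁ + (U - W) * q₂) / (E + U)) :
    ∀ x : ℝ, CVaR xs ≤ CVaR x :=
  newsvendor_cvar_minimiser_general P D hDint F hF r c v g hrc hcv hg E U W hE hU hW π hπ L hL β hβ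
    CVaR hCVaR q₁ q₂ hq₁ hq₂ xs hxs
end

section
/- Let s and m be positive integers with m ≤ s, let ε : {1,…,s} → ℝ and ℓ : ℝ → ℝ, and let real numbers c, ε_a, L_a, α with 0 < c ≤ ε_a be given. Assume: (i) ℓ is antitone on (−∞, −c]; (ii) ℓ(η) ≤ L_a for all η ≥ −c; (iii) ℓ(e) ≥ L_a for every e ≤ −ε_a; (iv) there exists an index set M₋ ⊆ {1,…,s} of cardinality m such that ε_i ≤ −ε_a for all i ∈ M₋ and every index i ∉ M₋ satisfies ε_j ≤ ε_i for all j ∈ M₋; (v) the set S := {i ∈ {1,…,s} : ℓ(ε_i) > α} has cardinality exactly m. Then for every index set M with M₋ ⊆ M ⊆ {1,…,s}, the tailored risk equals the empirical risk: α + (1/m)·Σ_{i ∈ M} max(ℓ(ε_i) − α, 0) = α + (1/m)·Σ_{i=1}^{s} max(ℓ(ε_i) − α, 0). -/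
/-- Deterministic core of Theorem 1 (adaptive data selection), one-sided tail scenario:
for any selected index set `M` containing `M₋`, the tailored risk computed over `M`
equals the empirical risk computed over all indices. -/
theorem tailored_risk_eq_empirical_risk_one_sided
    (s m : ℕ) (hs : 0 < s) (hm : 0 < m) (hms : m ≤ s)
    (ε : Fin s → ℝ) (ℓ : ℝ → ℝ) (c εa La α : ℝ)
    (hc : 0 < c) (hcεa : c ≤ εa)
    (hanti : AntitoneOn ℓ (Set.Iic (-c)))
    (hbdd : ∀ η : ℝ, -c ≤ η → ℓ η ≤ La)
    (htail : ∀ e : ℝ, e ≤ -εa → La ≤ ℓ e)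
    (Mneg : Finset (Fin s))
    (hMnegcard : Mneg.card = m)
    (hMneg : ∀ i ∈ Mneg, ε i ≤ -εa)
    (hbetween : ∀ i : Fin s, i ∉ Mneg → ∀ j ∈ Mneg, ε j ≤ ε i)
    (hScard : (Finset.univ.filter (fun i : Fin s => α < ℓ (ε i))).card = m) :
    ∀ M : Finset (Fin s), Mneg ⊆ M →
      α + (1 / (m : ℝ)) * ∑ i ∈ M, max (ℓ (ε i) - α) 0
        = α + (1 / (m : ℝ)) * ∑ i : Fin s, max (ℓ (ε i) - α) 0 := by
  intro M hMsub
  have hεa_c : -εa ≤ -c := neg_le_neg hcεa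
  -- Key: every index with loss above α lies in Mneg
  have hSsub : (Finset.univ.filter (fun i : Fin s => α < ℓ (ε i))) ⊆ Mneg := by
    intro i hi
    simp only [Finset.mem_filter, Finset.mem_univ, true_and] at hi
    by_contra hiM
    -- all j ∈ Mneg have loss > α
    have hall : ∀ j ∈ Mneg, α < ℓ (ε j) := by
      intro j hj
      have hεj : ε j ≤ -εa := hMneg j hj
      by_cases hcase : ε i ≤ -c
      · exact lt_of_lt_of_le hi
          (hanti (le_trans hεj hεa_c) hcase (hbetween i hiM j hj))
      · have h1 : ℓ (ε i) ≤ La := hbdd _ (le_of_not_ge hcase)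
        exact lt_of_lt_of_le (lt_of_lt_of_le hi h1) (htail _ hεj)
    have hsub : insert i Mneg ⊆ Finset.univ.filter (fun i : Fin s => α < ℓ (ε i)) := by
      intro k hk
      simp only [Finset.mem_filter, Finset.mem_univ, true_and]
      rcases Finset.mem_insert.mp hk with rfl | hk
      · exact hi
      · exact hall k hk
    have := Finset.card_le_card hsub
    rw [Finset.card_insert_of_notMem hiM, hMnegcard, hScard] at this
    omega
  have hzero : ∀ i ∈ Finset.univ \ M, max (ℓ (ε i) - α) 0 = 0 := by
    intro i hi
    have hiM : i ∉ M := (Finset.mem_sdiff.mp hi).2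
    have : ¬ α < ℓ (ε i) := by
      intro h
      exact hiM (hMsub (hSsub (by simp [h])))
    simp [max_eq_right, sub_nonpos.mpr (le_of_not_gt this)]
  have hsum : ∑ i ∈ M, max (ℓ (ε i) - α) 0 = ∑ i : Fin s, max (ℓ (ε i) - α) 0 := by
    rw [← Finset.sum_subset (Finset.subset_univ M)]
    intro i _ hiM
    exact hzero i (Finset.mem_sdiff.mpr ⟨Finset.mem_univ i, hiM⟩)
  rw [hsum]
end
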